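/- arXiv:math/0507458 — 4 statements merged into one kernel-verified Lean document; each statement's English description precedes it below -/
import Mathlib

section
/- For every integer n ≥ 0 and every real k > 0, the integral ∫₀^∞ xⁿ e^{-k² (log x)²} sin(2π · (log x)/(log q)) dx equals 0, where q = e^{-1/(2k²)}. -/
/-!
Substituting `x = exp t` turns the integral into `∫ exp ((n + 1) t - k² t²) sin (-4π k² t) dt`.
Completing the square shifts `t` by `(n + 1) / (2 k²)`, which moves the argument of the sine by
`-2π (n + 1)`: what is left is a Gaussian times an odd function, whose integral vanishes.
-/

open Real MeasureTheory Set

theorem Function.Odd.integral_eq_zero {G E : Type*} [MeasurableSpace G] [AddGroup G]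
    [MeasurableNeg G] [NormedAddCommGroup E] [NormedSpace ℝ E] {f : G → E} (hf : f.Odd)
    (μ : Measure G) [μ.IsNegInvariant] : ∫ x, f x ∂μ = 0 := by
  have := IsAddTorsionFree.of_isTorsionFree ℝ E
  rw [← self_eq_neg, ← integral_neg, ← integral_neg_eq_self f μ]
  simp only [hf.eq]

theorem integral_comp_exp {E : Type*} [NormedAddCommGroup E] [NormedSpace ℝ E] (g : ℝ → E) :
    ∫ t, exp t • g (exp t) = ∫ x in Ioi 0, g x := by
  rw [← range_exp, ← image_univ, integral_image_eq_integral_abs_deriv_smul MeasurableSet.univ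
    (fun t _ ↦ (hasDerivAt_exp t).hasDerivWithinAt) exp_injective.injOn, Measure.restrict_univ]
  simp only [abs_of_pos (exp_pos _)]

theorem integral_exp_neg_mul_sq_mul_sin_eq_zero (b d : ℝ) :
    ∫ t, exp (-b * t ^ 2) * sin (d * t) = 0 :=
  Function.Odd.integral_eq_zero (f := fun t ↦ exp (-b * t ^ 2) * sin (d * t))
    (fun t ↦ by simp only [neg_sq, mul_neg, sin_neg]) volume

theorem integral_exp_quadratic_mul_sin_eq_zero {b c d : ℝ} (hb : b ≠ 0) (m : ℤ)
    (hdc : d * c = 4 * π * m * b) : ∫ t, exp (c * t - b * t ^ 2) * sin (d * t) = 0 := by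
  set a := c / (2 * b)
  have hshift : ∀ t, exp (c * (t + a) - b * (t + a) ^ 2) * sin (d * (t + a)) =
      exp (c * a - b * a ^ 2) * (exp (-b * t ^ 2) * sin (d * t)) := by
    intro t
    have hda : d * (t + a) = d * t + m * (2 * π) := by
      simp only [a]; field_simp; linear_combination hdc
    rw [hda, sin_add_int_mul_two_pi, ← mul_assoc, ← exp_add]
    congr 2
    simp only [a]; field_simp; ring
  rw [← integral_add_right_eq_self _ a]
  simp only [hshift, integral_const_mul, integral_exp_neg_mul_sq_mul_sin_eq_zero, mul_zero]

theorem stmt0 (n : ℕ) (k : ℝ) (hk : 0 < k) (q : ℝ) (hq : q = Real.exp (-1 / (2 * k ^ 2))) :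
    ∫ x in Ioi (0 : ℝ), x ^ n * Real.exp (-k ^ 2 * Real.log x ^ 2) *
      Real.sin (2 * π * (Real.log x / Real.log q)) = 0 := by
  rw [← integral_comp_exp, ← integral_exp_quadratic_mul_sin_eq_zero (pow_ne_zero 2 hk.ne')
    (-(n + 1)) (c := n + 1) (d := -(4 * π * k ^ 2)) (by push_cast; ring)]
  congr 1 with t
  rw [hq, log_exp, log_exp, smul_eq_mul, ← exp_nat_mul, ← mul_assoc, ← exp_add, ← exp_add]
  congr 2
  · ring
  · field_simp
    ring
end

section
/- For every integer n ≥ 0, every integer j, and every real k > 0, the integral ∫₀^∞ xⁿ e^{-k² (log x)²} sin(2π j (log x)/(log q)) dx equals 0, where q = e^{-1/(2k²)}. -/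
open Real MeasureTheory Set

lemma odd_integral_zero (f : ℝ → ℝ) (h : ∀ t, f (-t) = - f t) : ∫ t, f t = 0 := by
  have h1 : ∫ t, f (-t) = ∫ t, f t := MeasureTheory.integral_neg_eq_self f volume
  simp only [h, integral_neg] at h1
  linarith

theorem stmt1 (n : ℕ) (j : ℤ) (k : ℝ) (hk : 0 < k) (q : ℝ)
    (hq : q = Real.exp (-1 / (2 * k ^ 2))) :
    ∫ x in Ioi (0 : ℝ), x ^ n * Real.exp (-k ^ 2 * Real.log x ^ 2) *
      Real.sin (2 * π * (j : ℝ) * (Real.log x / Real.log q)) = 0 := by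
  have hk2 : (2 * k ^ 2 : ℝ) ≠ 0 := by positivity
  have hlq : Real.log q = -1 / (2 * k ^ 2) := by rw [hq, Real.log_exp]
  set c : ℝ := 2 * π * (j : ℝ) / Real.log q with hc
  set a : ℝ := (n + 1) / (2 * k ^ 2) with ha
  have key : ∫ x in Ioi (0 : ℝ), x ^ n * Real.exp (-k ^ 2 * Real.log x ^ 2) *
      Real.sin (2 * π * (j : ℝ) * (Real.log x / Real.log q))
      = ∫ t : ℝ, Real.exp ((n + 1) * t - k ^ 2 * t ^ 2) * Real.sin (c * t) := by
    rw [show Ioi (0 : ℝ) = Real.exp '' univ by rw [image_univ, Real.range_exp],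
      integral_image_eq_integral_abs_deriv_smul MeasurableSet.univ
        (fun x _ => (Real.hasDerivAt_exp x).hasDerivWithinAt)
        Real.exp_injective.injOn]
    rw [Measure.restrict_univ]
    refine integral_congr_ae (Filter.Eventually.of_forall fun t => ?_)
    have h1 : |Real.exp t| = Real.exp t := abs_of_pos (Real.exp_pos t)
    simp only [smul_eq_mul]
    rw [h1, Real.log_exp]
    rw [show Real.exp t ^ n = Real.exp (n * t) from (Real.exp_nat_mul t n).symm]
    rw [show 2 * π * (j : ℝ) * (t / Real.log q) = c * t by rw [hc]; ring]
    rw [show ((n : ℝ) + 1) * t - k ^ 2 * t ^ 2 = t + (n * t + (-k ^ 2 * t ^ 2)) by ring,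
      Real.exp_add, Real.exp_add]
    ring
  rw [key, ← MeasureTheory.integral_add_right_eq_self
    (fun t => Real.exp ((n + 1) * t - k ^ 2 * t ^ 2) * Real.sin (c * t)) a]
  have hca : c * a = (-(j * (n + 1)) : ℤ) * (2 * π) := by
    rw [hc, ha, hlq]
    push_cast
    field_simp
  have hexp : ∀ t : ℝ, ((n : ℝ) + 1) * (t + a) - k ^ 2 * (t + a) ^ 2
      = ((n + 1) * a - k ^ 2 * a ^ 2) - k ^ 2 * t ^ 2 := by
    intro t
    have h2 : ((n : ℝ) + 1) * t - 2 * k ^ 2 * a * t = 0 := by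
      rw [ha]; field_simp; ring
    nlinarith [h2]
  have hsin : ∀ t : ℝ, Real.sin (c * (t + a)) = Real.sin (c * t) := by
    intro t
    rw [mul_add, hca, Real.sin_add_int_mul_two_pi]
  refine odd_integral_zero _ fun t => ?_
  simp only [hexp, hsin]
  rw [show (-t : ℝ) ^ 2 = t ^ 2 by ring]
  rw [show c * (-t) = -(c * t) by ring, Real.sin_neg]
  ring
end

section
/- For every real λ with |λ| ≤ 1, the function x ↦ (k/√π) e^{-k² (log x)²} (1 + λ sin(2π (log x)/(log q))) is nonnegative on (0, ∞) and has the same moments of every nonnegative integer order as x ↦ (k/√π) e^{-k² (log x)²}, where q = e^{-1/(2k²)} and k > 0. -/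
open Real MeasureTheory Set

/-- Change of variables `x = exp t` for integrals over `(0, ∞)`. -/
lemma subst_exp (g : ℝ → ℝ) :
    ∫ x in Ioi (0 : ℝ), g x = ∫ t : ℝ, Real.exp t * g (Real.exp t) := by
  rw [← Real.range_exp, ← Set.image_univ,
    integral_image_eq_integral_abs_deriv_smul MeasurableSet.univ
      (fun x _ => (Real.hasDerivAt_exp x).hasDerivWithinAt)
      Real.exp_injective.injOn g, Measure.restrict_univ]
  simp only [smul_eq_mul, abs_of_pos (Real.exp_pos _)]

lemma gauss_integrable (k c : ℝ) (hk : 0 < k) :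
    Integrable (fun t : ℝ => Real.exp (c * t - k ^ 2 * t ^ 2)) := by
  have hk2 : (0:ℝ) < k ^ 2 := by positivity
  have key : ∀ t : ℝ, c * t - k ^ 2 * t ^ 2
      = c ^ 2 / (4 * k ^ 2) + (-(k ^ 2) * (t - c / (2 * k ^ 2)) ^ 2) := by
    intro t; field_simp; ring
  simp_rw [key, Real.exp_add]
  exact ((integrable_exp_neg_mul_sq hk2).comp_sub_right (c / (2 * k ^ 2))).const_mul _

lemma odd_gauss_sin (k a : ℝ) :
    ∫ t : ℝ, Real.exp (-(k ^ 2) * t ^ 2) * Real.sin (a * t) = 0 := by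
  have h := MeasureTheory.integral_neg_eq_self
    (fun t : ℝ => Real.exp (-(k ^ 2) * t ^ 2) * Real.sin (a * t)) volume
  simp only [neg_sq, mul_neg, Real.sin_neg, mul_neg] at h
  rw [MeasureTheory.integral_neg] at h
  linarith

/-- The sine-weighted Gaussian-type integral vanishes when the frequency matches. -/
lemma key_zero (k : ℝ) (hk : 0 < k) (n : ℕ) :
    ∫ t : ℝ, Real.exp (((n : ℝ) + 1) * t - k ^ 2 * t ^ 2)
      * Real.sin (-(4 * π * k ^ 2) * t) = 0 := by
  set b : ℝ := ((n : ℝ) + 1) / (2 * k ^ 2) with hb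
  have hk2 : (k:ℝ) ^ 2 ≠ 0 := by positivity
  have h := MeasureTheory.integral_add_right_eq_self (μ := volume)
    (fun t : ℝ => Real.exp (((n : ℝ) + 1) * t - k ^ 2 * t ^ 2)
      * Real.sin (-(4 * π * k ^ 2) * t)) b
  rw [← h]
  have heq : ∀ s : ℝ,
      Real.exp (((n : ℝ) + 1) * (s + b) - k ^ 2 * (s + b) ^ 2)
        * Real.sin (-(4 * π * k ^ 2) * (s + b))
      = Real.exp (((n : ℝ) + 1) ^ 2 / (4 * k ^ 2)) *
        (Real.exp (-(k ^ 2) * s ^ 2) * Real.sin (-(4 * π * k ^ 2) * s)) := by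
    intro s
    have h1 : ((n : ℝ) + 1) * (s + b) - k ^ 2 * (s + b) ^ 2
        = ((n : ℝ) + 1) ^ 2 / (4 * k ^ 2) + (-(k ^ 2) * s ^ 2) := by
      rw [hb]; field_simp; ring
    have h2 : -(4 * π * k ^ 2) * (s + b)
        = -(4 * π * k ^ 2) * s + (-((n : ℝ) + 1)) * (2 * π) := by
      rw [hb]; field_simp; ring
    have h3 : Real.sin (-(4 * π * k ^ 2) * (s + b))
        = Real.sin (-(4 * π * k ^ 2) * s) := by
      rw [h2]
      have := Real.sin_add_int_mul_two_pi (-(4 * π * k ^ 2) * s) (-((n : ℤ) + 1))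
      push_cast at this ⊢
      convert this using 3 <;> push_cast <;> ring
    rw [h1, Real.exp_add, h3, mul_assoc]
  simp_rw [heq]
  rw [MeasureTheory.integral_const_mul, odd_gauss_sin k, mul_zero]

theorem stmt3 (k : ℝ) (hk : 0 < k) (q : ℝ) (hq : q = Real.exp (-1 / (2 * k ^ 2)))
    (lam : ℝ) (hlam : |lam| ≤ 1) :
    (∀ x ∈ Ioi (0 : ℝ),
        0 ≤ (k / Real.sqrt π) * Real.exp (-k ^ 2 * Real.log x ^ 2) *
          (1 + lam * Real.sin (2 * π * (Real.log x / Real.log q)))) ∧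
    (∀ n : ℕ,
        ∫ x in Ioi (0 : ℝ),
            x ^ n * ((k / Real.sqrt π) * Real.exp (-k ^ 2 * Real.log x ^ 2) *
              (1 + lam * Real.sin (2 * π * (Real.log x / Real.log q))))
          = ∫ x in Ioi (0 : ℝ),
              x ^ n * ((k / Real.sqrt π) * Real.exp (-k ^ 2 * Real.log x ^ 2))) := by
  have hlogq : Real.log q = -1 / (2 * k ^ 2) := by rw [hq, Real.log_exp]
  have hk2 : (k:ℝ) ^ 2 ≠ 0 := by positivity
  constructor
  · intro x _
    have hbd : |lam * Real.sin (2 * π * (Real.log x / Real.log q))| ≤ 1 := by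
      rw [abs_mul]
      exact mul_le_one₀ hlam (abs_nonneg _) (Real.abs_sin_le_one _)
    have h1 : -1 ≤ lam * Real.sin (2 * π * (Real.log x / Real.log q)) :=
      (abs_le.mp hbd).1
    have h2 : (0:ℝ) ≤ (k / Real.sqrt π) * Real.exp (-k ^ 2 * Real.log x ^ 2) := by
      have : (0:ℝ) < π := Real.pi_pos
      positivity
    have h3 : (0:ℝ) ≤ 1 + lam * Real.sin (2 * π * (Real.log x / Real.log q)) := by
      linarith
    exact mul_nonneg h2 h3
  · intro n
    set C : ℝ := k / Real.sqrt π with hC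
    -- frequency
    have hfreq : ∀ t : ℝ, 2 * π * (t / Real.log q) = -(4 * π * k ^ 2) * t := by
      intro t; rw [hlogq]; field_simp; ring
    rw [subst_exp, subst_exp]
    have hexp : ∀ t : ℝ, Real.exp t * (Real.exp t ^ n * (C * Real.exp (-k ^ 2 * t ^ 2)))
        = C * Real.exp (((n : ℝ) + 1) * t - k ^ 2 * t ^ 2) := by
      intro t
      rw [← Real.exp_nat_mul,
        show ((n : ℝ) + 1) * t - k ^ 2 * t ^ 2 = t + ((n : ℝ) * t + (-k ^ 2 * t ^ 2)) by ring,
        Real.exp_add, Real.exp_add]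
      ring
    have hIg : Integrable (fun t : ℝ => C * Real.exp (((n : ℝ) + 1) * t - k ^ 2 * t ^ 2)) :=
      (gauss_integrable k _ hk).const_mul C
    have hIs : Integrable (fun t : ℝ =>
        (lam * C * Real.sin (-(4 * π * k ^ 2) * t)) *
          Real.exp (((n : ℝ) + 1) * t - k ^ 2 * t ^ 2)) := by
      apply (gauss_integrable k _ hk).bdd_mul (c := |lam * C|)
      · exact ((measurable_const.mul ((Real.measurable_sin.comp
          (measurable_const.mul measurable_id))))).aestronglyMeasurable
      · refine Filter.Eventually.of_forall fun t => ?_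
        calc ‖lam * C * Real.sin (-(4 * π * k ^ 2) * t)‖
            = |lam * C| * |Real.sin (-(4 * π * k ^ 2) * t)| := by
              rw [Real.norm_eq_abs, abs_mul]
          _ ≤ |lam * C| * 1 :=
              mul_le_mul_of_nonneg_left (Real.abs_sin_le_one _) (abs_nonneg _)
          _ = |lam * C| := mul_one _
    have hsplit : ∀ t : ℝ,
        Real.exp t * (Real.exp t ^ n * (C * Real.exp (-k ^ 2 * Real.log (Real.exp t) ^ 2) *
          (1 + lam * Real.sin (2 * π * (Real.log (Real.exp t) / Real.log q)))))
        = C * Real.exp (((n : ℝ) + 1) * t - k ^ 2 * t ^ 2)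
          + (lam * C * Real.sin (-(4 * π * k ^ 2) * t)) *
              Real.exp (((n : ℝ) + 1) * t - k ^ 2 * t ^ 2) := by
      intro t
      rw [Real.log_exp, hfreq t]
      have h := hexp t
      linear_combination (1 + lam * Real.sin (-(4 * π * k ^ 2) * t)) * h
    calc ∫ t : ℝ, Real.exp t * (Real.exp t ^ n *
            (C * Real.exp (-k ^ 2 * Real.log (Real.exp t) ^ 2) *
              (1 + lam * Real.sin (2 * π * (Real.log (Real.exp t) / Real.log q)))))
        = ∫ t : ℝ, (C * Real.exp (((n : ℝ) + 1) * t - k ^ 2 * t ^ 2)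
            + (lam * C * Real.sin (-(4 * π * k ^ 2) * t)) *
                Real.exp (((n : ℝ) + 1) * t - k ^ 2 * t ^ 2)) := by
          exact integral_congr_ae (Filter.Eventually.of_forall hsplit)
      _ = (∫ t : ℝ, C * Real.exp (((n : ℝ) + 1) * t - k ^ 2 * t ^ 2))
            + ∫ t : ℝ, (lam * C * Real.sin (-(4 * π * k ^ 2) * t)) *
                Real.exp (((n : ℝ) + 1) * t - k ^ 2 * t ^ 2) :=
          integral_add hIg hIs
      _ = ∫ t : ℝ, C * Real.exp (((n : ℝ) + 1) * t - k ^ 2 * t ^ 2) := by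
          have : ∫ t : ℝ, (lam * C * Real.sin (-(4 * π * k ^ 2) * t)) *
              Real.exp (((n : ℝ) + 1) * t - k ^ 2 * t ^ 2) = 0 := by
            have heq : ∀ t : ℝ, (lam * C * Real.sin (-(4 * π * k ^ 2) * t)) *
                Real.exp (((n : ℝ) + 1) * t - k ^ 2 * t ^ 2)
                = (lam * C) * (Real.exp (((n : ℝ) + 1) * t - k ^ 2 * t ^ 2)
                    * Real.sin (-(4 * π * k ^ 2) * t)) := fun t => by ring
            simp_rw [heq]
            rw [MeasureTheory.integral_const_mul, key_zero k hk n, mul_zero]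
          rw [this, add_zero]
      _ = ∫ t : ℝ, Real.exp t * (Real.exp t ^ n *
            (C * Real.exp (-k ^ 2 * Real.log (Real.exp t) ^ 2))) := by
          apply integral_congr_ae (Filter.Eventually.of_forall fun t => ?_)
          rw [Real.log_exp, hexp t]
end

section
/- For any real a, k > 0, and real ω, ∫₀^∞ x^a e^{-k²(log x)²} sin(ω log x) dx = (√π/k) e^{(a+1)²/(4k²)} sin(ω(a+1)/(2k²)) e^{-ω²/(4k²)}; in particular it vanishes whenever ω(a+1)/(2k²) ∈ πℤ. -/
open Real MeasureTheory Set Complex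

theorem stmt13 (a k ω : ℝ) (hk : 0 < k) :
    (∫ x in Ioi (0 : ℝ), x ^ a * Real.exp (-k ^ 2 * Real.log x ^ 2) *
          Real.sin (ω * Real.log x))
      = Real.sqrt π / k * Real.exp ((a + 1) ^ 2 / (4 * k ^ 2)) *
          Real.sin (ω * (a + 1) / (2 * k ^ 2)) * Real.exp (-ω ^ 2 / (4 * k ^ 2)) ∧
    ((∃ m : ℤ, ω * (a + 1) / (2 * k ^ 2) = π * m) →
      (∫ x in Ioi (0 : ℝ), x ^ a * Real.exp (-k ^ 2 * Real.log x ^ 2) *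
          Real.sin (ω * Real.log x)) = 0) := by
  have hk0 : (k : ℝ) ≠ 0 := hk.ne'
  set g : ℝ → ℝ := fun x => x ^ a * Real.exp (-k ^ 2 * Real.log x ^ 2) *
      Real.sin (ω * Real.log x) with hg
  set b : ℂ := -(k : ℂ) ^ 2 with hb
  set c : ℂ := ((a : ℂ) + 1) + (ω : ℂ) * Complex.I with hc
  have hbre : b.re < 0 := by
    simp only [hb]
    simp [← Complex.ofReal_pow]
    positivity
  -- change of variables x = exp t
  have step1 : (∫ x in Ioi (0 : ℝ), g x) = ∫ t : ℝ, Real.exp t • g (Real.exp t) := by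
    have himg : Real.exp '' univ = Ioi (0 : ℝ) := by
      rw [image_univ, Real.range_exp]
    rw [← himg, integral_image_eq_integral_abs_deriv_smul MeasurableSet.univ
      (fun x _ => (Real.hasDerivAt_exp x).hasDerivWithinAt) Real.exp_injective.injOn g,
      setIntegral_univ]
    congr 1 with t
    rw [abs_of_pos (Real.exp_pos t)]
  -- pointwise identification with the imaginary part of a complex exponential
  have step2 : ∀ t : ℝ, Real.exp t • g (Real.exp t)
      = (Complex.exp (b * (t : ℂ) ^ 2 + c * (t : ℂ) + 0)).im := by
    intro t
    have hz : b * (t : ℂ) ^ 2 + c * (t : ℂ) + 0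
        = ((-k ^ 2 * t ^ 2 + (a + 1) * t : ℝ) : ℂ) + ((ω * t : ℝ) : ℂ) * Complex.I := by
      rw [hb, hc]; push_cast; ring
    rw [hz, Complex.exp_im]
    simp only [Complex.add_re, Complex.ofReal_re, Complex.mul_re, Complex.I_re, Complex.I_im,
      Complex.ofReal_im, Complex.add_im, Complex.mul_im]
    ring_nf
    simp only [hg, smul_eq_mul, Real.log_exp]
    rw [Real.rpow_def_of_pos (Real.exp_pos t), Real.log_exp]
    rw [show -(k ^ 2 * t ^ 2) + t + t * a = t + (t * a + -(k ^ 2 * t ^ 2)) by ring,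
      Real.exp_add, Real.exp_add]
    ring_nf
  have hint : Integrable (fun t : ℝ => Complex.exp (b * (t : ℂ) ^ 2 + c * (t : ℂ) + 0)) :=
    integrable_cexp_quadratic' hbre c 0
  have step3 : (∫ t : ℝ, Real.exp t • g (Real.exp t))
      = (∫ t : ℝ, Complex.exp (b * (t : ℂ) ^ 2 + c * (t : ℂ) + 0)).im := by
    simp_rw [step2]
    exact integral_im hint
  have step4 : (∫ t : ℝ, Complex.exp (b * (t : ℂ) ^ 2 + c * (t : ℂ) + 0))
      = ((π / (k ^ 2 : ℝ) : ℝ) : ℂ) ^ (1 / 2 : ℂ) * Complex.exp (c ^ 2 / (4 * (k : ℂ) ^ 2)) := by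
    have hkc : ((k : ℂ)) ≠ 0 := by exact_mod_cast hk0
    rw [integral_cexp_quadratic hbre c 0]
    congr 2
    · rw [hb, neg_neg]; push_cast; ring
    · rw [hb]; field_simp; ring
  -- compute the constant
  have hconst : ((π / (k ^ 2 : ℝ) : ℝ) : ℂ) ^ (1 / 2 : ℂ)
      = ((Real.sqrt π / k : ℝ) : ℂ) := by
    rw [show (1 / 2 : ℂ) = ((1 / 2 : ℝ) : ℂ) by norm_num,
      ← Complex.ofReal_cpow (by positivity) (1 / 2 : ℝ)]
    norm_cast
    rw [← Real.sqrt_eq_rpow, Real.sqrt_div pi_pos.le, Real.sqrt_sq hk.le]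
  -- compute the exponent
  have hexp : c ^ 2 / (4 * (k : ℂ) ^ 2)
      = (( ((a+1) ^ 2 - ω ^ 2) / (4 * k ^ 2) : ℝ) : ℂ)
        + ((ω * (a + 1) / (2 * k ^ 2) : ℝ) : ℂ) * Complex.I := by
    have hkc : ((k : ℂ)) ≠ 0 := by exact_mod_cast hk0
    rw [hc]
    push_cast
    field_simp
    ring_nf
    rw [Complex.I_sq]
    ring
  have step5 : (∫ t : ℝ, Complex.exp (b * (t : ℂ) ^ 2 + c * (t : ℂ) + 0)).im
      = Real.sqrt π / k * (Real.exp (((a+1) ^ 2 - ω ^ 2) / (4 * k ^ 2))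
          * Real.sin (ω * (a + 1) / (2 * k ^ 2))) := by
    have him2 : ∀ r X Y : ℝ, (((r : ℝ) : ℂ) * Complex.exp ((X : ℂ) + (Y : ℂ) * Complex.I)).im
        = r * (Real.exp X * Real.sin Y) := by
      intro r X Y
      rw [Complex.im_ofReal_mul, Complex.exp_im]
      simp
    rw [step4, hconst, hexp, him2]
  have key : (∫ x in Ioi (0 : ℝ), g x)
      = Real.sqrt π / k * Real.exp ((a + 1) ^ 2 / (4 * k ^ 2)) *
          Real.sin (ω * (a + 1) / (2 * k ^ 2)) * Real.exp (-ω ^ 2 / (4 * k ^ 2)) := by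
    rw [step1, step3, step5,
      show ((a+1) ^ 2 - ω ^ 2) / (4 * k ^ 2)
        = (a + 1) ^ 2 / (4 * k ^ 2) + -ω ^ 2 / (4 * k ^ 2) by ring,
      Real.exp_add]
    ring
  refine ⟨key, ?_⟩
  rintro ⟨m, hm⟩
  rw [key, hm, mul_comm π (m : ℝ), Real.sin_int_mul_pi]
  ring
end
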